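/- arXiv:math/0302042 — 5 statements merged into one kernel-verified Lean document; each statement's English description precedes it below -/
import Mathlib

section
/- The derived subgroup D(W₆) = A₆' ⋊ A₆ (where W₆ is the Weyl group of type B₆ realized as signed permutation 6×6 matrices) acts irreducibly on ℂ⁶. -/
noncomputable section
open Matrix Complex

/-- The signed permutation matrix with underlying permutation `σ` and signs `a`. -/
def sp (σ : Equiv.Perm (Fin 6)) (a : Fin 6 → ℂ) : Matrix (Fin 6) (Fin 6) ℂ :=
  Matrix.of fun i j => if i = σ j then a j else 0

/-- All entries are `±1`. -/
def signs (a : Fin 6 → ℂ) : Prop := ∀ k, a k = 1 ∨ a k = -1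

/-- The Weyl group of type `B₆`: all signed permutation matrices. -/
def W6Set : Set (GL (Fin 6) ℂ) :=
  {g | ∃ σ a, signs a ∧ (g : Matrix (Fin 6) (Fin 6) ℂ) = sp σ a}

/-- `W₆⁺`: signed permutation matrices of determinant 1. -/
def W6plusSet : Set (GL (Fin 6) ℂ) :=
  {g | ∃ σ a, signs a ∧ (g : Matrix (Fin 6) (Fin 6) ℂ) = sp σ a ∧
    (g : Matrix (Fin 6) (Fin 6) ℂ).det = 1}

/-- `W₆'` (type `D₆`): signed permutation matrices with product of entries 1. -/
def W6'Set : Set (GL (Fin 6) ℂ) :=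
  {g | ∃ σ a, signs a ∧ (∏ k, a k) = 1 ∧ (g : Matrix (Fin 6) (Fin 6) ℂ) = sp σ a}

/-- `A₆'`: diagonal sign matrices with product of entries 1. -/
def A6'Set : Set (GL (Fin 6) ℂ) :=
  {g | ∃ a, signs a ∧ (∏ k, a k) = 1 ∧ (g : Matrix (Fin 6) (Fin 6) ℂ) = Matrix.diagonal a}

/-- `i · Id` as an element of `GL₆(ℂ)`. -/
def iId : GL (Fin 6) ℂ :=
  ⟨Matrix.diagonal (fun _ => Complex.I), Matrix.diagonal (fun _ => -Complex.I),
    by simp [Matrix.diagonal_mul_diagonal, Complex.I_mul_I],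
    by simp [Matrix.diagonal_mul_diagonal, Complex.I_mul_I]⟩

/-- For a monomial matrix, the product of its nonzero entries (γ). -/
def gam (m : Matrix (Fin 6) (Fin 6) ℂ) : ℂ := ∏ j, ∑ i, m i j

/-- `𝒲₆ = ⟨W₆⁺, i·Id⟩`. -/
def CW6Sub : Subgroup (GL (Fin 6) ℂ) := Subgroup.closure (W6plusSet ∪ {iId})

/-- `𝒲₆' = 𝒲₆ ∩ ker γ`. -/
def CW6'Set : Set (GL (Fin 6) ℂ) :=
  {g | g ∈ CW6Sub ∧ gam (g : Matrix (Fin 6) (Fin 6) ℂ) = 1}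

def CW6'Sub : Subgroup (GL (Fin 6) ℂ) := Subgroup.closure CW6'Set

def W6Sub : Subgroup (GL (Fin 6) ℂ) := Subgroup.closure W6Set
def W6plusSub : Subgroup (GL (Fin 6) ℂ) := Subgroup.closure W6plusSet
def W6'Sub : Subgroup (GL (Fin 6) ℂ) := Subgroup.closure W6'Set

/-! Averaging `w` with its image under the sign change at two coordinates `i ≠ j` projects `w`
onto those coordinates, so the pointwise multipliers preserving an invariant subspace `U` contain
the indicators of all pairs, hence (as `{i, j} ∩ {i, k} = {i}`) of all points. A nonzero `U`
therefore contains a standard basis vector, and the alternating group, transitive on `n ≥ 3`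
points, moves it to every other one. -/

namespace Submodule

section

variable {ι R : Type*} [CommSemiring R]

def multipliers (U : Submodule R (ι → R)) : Subalgebra R (ι → R) where
  carrier := {c | ∀ w ∈ U, c * w ∈ U}
  mul_mem' {c d} hc hd w hw := by
    rw [mul_assoc]
    exact hc _ (hd w hw)
  add_mem' {c d} hc hd w hw := by
    rw [add_mul]
    exact U.add_mem (hc w hw) (hd w hw)
  algebraMap_mem' r w hw := by
    rw [Algebra.algebraMap_eq_smul_one, smul_mul_assoc, one_mul]
    exact U.smul_mem r hw

theorem mem_multipliers {U : Submodule R (ι → R)} {c : ι → R} :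
    c ∈ U.multipliers ↔ ∀ w ∈ U, c * w ∈ U :=
  Iff.rfl

end

variable {ι K : Type*} [DecidableEq ι] [Field K]

theorem single_one_mem_of_apply_ne_zero {U : Submodule K (ι → K)} {i : ι}
    (hi : Pi.single i 1 ∈ U.multipliers) {v : ι → K} (hv : v ∈ U) (hvi : v i ≠ 0) :
    Pi.single i 1 ∈ U := by
  have : Pi.single i (v i) ∈ U := by
    rw [← one_mul (v i), Pi.single_mul_left]
    exact mem_multipliers.mp hi v hv
  simpa [← Pi.single_smul', hvi] using U.smul_mem (v i)⁻¹ this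

variable [Fintype ι]

theorem eq_top_of_forall_single_one_mem {U : Submodule K (ι → K)}
    (h : ∀ i, Pi.single i 1 ∈ U) : U = ⊤ := by
  rw [eq_top_iff, ← (Pi.basisFun K ι).span_eq, span_le]
  rintro _ ⟨i, rfl⟩
  simpa using h i

variable [NeZero (2 : K)]

theorem single_add_single_mem_multipliers {U : Submodule K (ι → K)}
    (hU : ∀ a : ι → K, (∀ k, a k = 1 ∨ a k = -1) → ∏ k, a k = 1 →
      a ∈ U.multipliers)
    {i j : ι} (hij : i ≠ j) :
    Pi.single i 1 + Pi.single j 1 ∈ U.multipliers := by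
  set a : ι → K := fun k => if k = i ∨ k = j then -1 else 1
  have ha : a ∈ U.multipliers :=
    hU a (fun k => by by_cases h : k = i ∨ k = j <;> simp [a, h])
      (by simp [a, Finset.prod_ite, Finset.filter_or, Finset.filter_eq', hij])
  have : Pi.single i 1 + Pi.single j 1 = (2⁻¹ : K) • (1 - a) := by
    ext k
    by_cases hki : k = i <;> by_cases hkj : k = j <;>
      simp_all [a, one_add_one_eq_two, two_ne_zero]
  rw [this]
  exact Subalgebra.smul_mem _ (sub_mem (one_mem _) ha) _

theorem single_mem_multipliers {U : Submodule K (ι → K)}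
    (hU : ∀ a : ι → K, (∀ k, a k = 1 ∨ a k = -1) → ∏ k, a k = 1 →
      a ∈ U.multipliers)
    (hcard : 3 ≤ Fintype.card ι) (i : ι) :
    Pi.single i 1 ∈ U.multipliers := by
  have hcompl : 1 < ({i}ᶜ : Finset ι).card := by
    rw [Finset.card_compl, Finset.card_singleton]
    omega
  obtain ⟨j, hj, k, hk, hjk⟩ := Finset.one_lt_card.mp hcompl
  rw [Finset.mem_compl, Finset.mem_singleton] at hj hk
  have : (Pi.single i 1 : ι → K) =
      (Pi.single i 1 + Pi.single j 1) * (Pi.single i 1 + Pi.single k 1) := by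
    simp [mul_add, add_mul, ← Pi.single_mul_left, Ne.symm hj, Ne.symm hk, hjk]
  rw [this]
  exact mul_mem (single_add_single_mem_multipliers hU (Ne.symm hj))
    (single_add_single_mem_multipliers hU (Ne.symm hk))

theorem eq_bot_or_eq_top_of_signs_of_alternatingGroup (U : Submodule K (ι → K))
    (hcard : 3 ≤ Fintype.card ι)
    (hsigns : ∀ a : ι → K, (∀ k, a k = 1 ∨ a k = -1) → ∏ k, a k = 1 →
      ∀ w ∈ U, a * w ∈ U)
    (hperm : ∀ σ ∈ alternatingGroup ι, ∀ w ∈ U, w ∘ σ ∈ U) :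
    U = ⊥ ∨ U = ⊤ := by
  refine or_iff_not_imp_left.mpr fun hbot => ?_
  obtain ⟨v, hv, hv0⟩ := U.ne_bot_iff.mp hbot
  obtain ⟨i, hvi⟩ := Function.ne_iff.mp hv0
  have hmul : Pi.single i 1 ∈ U.multipliers :=
    single_mem_multipliers (fun a ha hprod => mem_multipliers.mpr (hsigns a ha hprod)) hcard i
  have hi : Pi.single i 1 ∈ U := single_one_mem_of_apply_ne_zero hmul hv hvi
  have : MulAction.IsPretransitive (alternatingGroup ι) ι :=
    alternatingGroup.isPretransitive_of_three_le_card ι (by rwa [Nat.card_eq_fintype_card])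
  refine eq_top_of_forall_single_one_mem fun m => ?_
  obtain ⟨σ, hσ⟩ := MulAction.exists_smul_eq (alternatingGroup ι) m i
  simpa [Pi.single_comp_equiv, ← hσ, Subgroup.smul_def, Equiv.Perm.smul_def] using
    hperm σ σ.2 _ hi

end Submodule

theorem sp_eq_permMatrix_mul_diagonal (σ : Equiv.Perm (Fin 6)) (a : Fin 6 → ℂ) :
    sp σ a = σ⁻¹.permMatrix ℂ * diagonal a := by
  ext i j
  simp [sp, PEquiv.toMatrix, Equiv.eq_symm_apply, eq_comm]

theorem sp_mulVec (σ : Equiv.Perm (Fin 6)) (a v : Fin 6 → ℂ) :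
    sp σ a *ᵥ v = (a * v) ∘ ⇑σ⁻¹ := by
  rw [sp_eq_permMatrix_mul_diagonal, ← mulVec_mulVec, permMatrix_mulVec]
  ext i
  simp [mulVec_diagonal]

theorem isUnit_sp (σ : Equiv.Perm (Fin 6)) {a : Fin 6 → ℂ} (ha : IsUnit a) :
    IsUnit (sp σ a) := by
  rw [sp_eq_permMatrix_mul_diagonal, ← permMatrixHom_apply]
  exact ((Group.isUnit σ).map (permMatrixHom (R := ℂ))).mul (isUnit_diagonal.mpr ha)

theorem signs.isUnit {a : Fin 6 → ℂ} (ha : signs a) : IsUnit a :=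
  Pi.isUnit_iff.mpr fun k => by rcases ha k with h | h <;> simp [h]

/-- The derived subgroup `D(W₆) = A₆' ⋊ A₆` of the Weyl group of type `B₆`
(signed permutation matrices with even underlying permutation and product of
entries equal to 1) acts irreducibly on `ℂ⁶`. -/
theorem stmt_5 :
    ∀ U : Submodule ℂ (Fin 6 → ℂ),
      (∀ g : GL (Fin 6) ℂ,
        (∃ σ a, Equiv.Perm.sign σ = 1 ∧ signs a ∧ (∏ k, a k) = 1 ∧
          (g : Matrix (Fin 6) (Fin 6) ℂ) = sp σ a) →
        ∀ v ∈ U, Matrix.mulVec (g : Matrix (Fin 6) (Fin 6) ℂ) v ∈ U) →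
      U = ⊥ ∨ U = ⊤ := by
  intro U hU
  have hsp : ∀ σ a, Equiv.Perm.sign σ = 1 → signs a → ∏ k, a k = 1 →
      ∀ w ∈ U, sp σ a *ᵥ w ∈ U :=
    fun σ a hσ ha hprod => hU (isUnit_sp σ ha.isUnit).unit ⟨σ, a, hσ, ha, hprod, rfl⟩
  refine U.eq_bot_or_eq_top_of_signs_of_alternatingGroup (by simp) (fun a ha hprod w hw => ?_)
    (fun σ hσ w hw => ?_)
  · simpa [sp_mulVec] using hsp 1 a (by simp) ha hprod w hw
  · simpa [sp_mulVec] using hsp σ⁻¹ 1 (by simpa using hσ) (fun _ => Or.inl rfl) (by simp) w hw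
end
end

section
/- Let W₆' be the Weyl group of type D₆ realized as signed 6×6 permutation matrices with an even number of sign changes, and π : W₆' → S₆ the projection onto the permutation part. If H is a normal subgroup of W₆' with π(H) = S₆, then H = W₆'. -/
noncomputable section
open Matrix Complex

/-! Conjugating the diagonal sign change at `j, l` by an element of `H` over the transposition
`(j k)` moves it to the sign change at `k, l`; so the commutator, which lies in `H` by normality,
is the sign change at `j, k`. These pairwise sign changes generate `A₆'`, hence `A₆' ≤ H`, and
as `H` meets every fibre of `π` and the fibres are the cosets of `A₆'`, `H = W₆'`. -/

lemma signs.mul_self {a : Fin 6 → ℂ} (ha : signs a) (k : Fin 6) : a k * a k = 1 := by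
  rcases ha k with h | h <;> simp [h]

lemma signs.ne_zero {a : Fin 6 → ℂ} (ha : signs a) (k : Fin 6) : a k ≠ 0 := by
  rcases ha k with h | h <;> simp [h]

lemma signs.mul {a b : Fin 6 → ℂ} (ha : signs a) (hb : signs b) :
    signs fun k => a k * b k := by
  intro k
  rcases ha k with h | h <;> rcases hb k with h' | h' <;> simp [h, h']

lemma signs.comp {a : Fin 6 → ℂ} (ha : signs a) (f : Fin 6 → Fin 6) :
    signs fun k => a (f k) :=
  fun k => ha (f k)

lemma sp_mul (σ τ : Equiv.Perm (Fin 6)) (a b : Fin 6 → ℂ) :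
    sp σ a * sp τ b = sp (σ * τ) (fun j => a (τ j) * b j) := by
  ext i j
  simp only [sp, Matrix.mul_apply, Matrix.of_apply, Equiv.Perm.mul_apply]
  rw [Finset.sum_eq_single (τ j) (fun k _ hk => by simp [hk]) (by simp)]
  by_cases h : i = σ (τ j) <;> simp [h, mul_comm]

lemma sp_one (a : Fin 6 → ℂ) : sp 1 a = diagonal a := by
  ext i j
  by_cases h : i = j <;> simp [sp, h]

lemma sp_mul_diagonal (σ : Equiv.Perm (Fin 6)) (b c : Fin 6 → ℂ) :
    sp σ b * diagonal c = diagonal (fun i => c (σ⁻¹ i)) * sp σ b := by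
  ext i j
  simp only [sp, mul_diagonal, diagonal_mul, of_apply]
  split_ifs with h <;> simp [h, mul_comm]

lemma sp_eq_diagonal_mul_sp {b : Fin 6 → ℂ} (hb : signs b) (σ : Equiv.Perm (Fin 6))
    (a : Fin 6 → ℂ) : sp σ a = diagonal (fun i => a (σ⁻¹ i) * b (σ⁻¹ i)) * sp σ b := by
  rw [← sp_one, sp_mul, one_mul]
  congr 1
  funext j
  simp [mul_assoc, hb.mul_self]

lemma sp_injective {σ τ : Equiv.Perm (Fin 6)} {a b : Fin 6 → ℂ} (hb : signs b)
    (h : sp σ a = sp τ b) : σ = τ ∧ a = b := by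
  have key : ∀ k, σ k = τ k ∧ a k = b k := by
    intro k
    have hk := congrFun (congrFun h (τ k)) k
    simp only [sp, of_apply, if_true] at hk
    split_ifs at hk with he
    · exact ⟨he.symm, hk⟩
    · exact absurd hk.symm (hb.ne_zero k)
  exact ⟨Equiv.ext fun k => (key k).1, funext fun k => (key k).2⟩

lemma coe_inv_of_coe_eq_sp {g : GL (Fin 6) ℂ} {σ : Equiv.Perm (Fin 6)} {a : Fin 6 → ℂ}
    (ha : signs a) (hg : (g : Matrix (Fin 6) (Fin 6) ℂ) = sp σ a) :
    ((g⁻¹ : GL (Fin 6) ℂ) : Matrix (Fin 6) (Fin 6) ℂ) = sp σ⁻¹ (fun j => a (σ⁻¹ j)) := by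
  refine Units.inv_eq_of_mul_eq_one_right ?_
  rw [hg, sp_mul, mul_inv_cancel, sp_one]
  simp [ha.mul_self, diagonal_one]

def W6'Grp : Subgroup (GL (Fin 6) ℂ) where
  carrier := W6'Set
  one_mem' := ⟨1, 1, fun _ => Or.inl rfl, by simp, by simp [sp_one]⟩
  mul_mem' := by
    rintro g h ⟨σ, a, ha, hpa, hga⟩ ⟨τ, b, hb, hpb, hhb⟩
    refine ⟨σ * τ, _, (ha.comp τ).mul hb, ?_, by rw [Units.val_mul, hga, hhb, sp_mul]⟩
    rw [Finset.prod_mul_distrib, Equiv.prod_comp τ a, hpa, hpb, one_mul]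
  inv_mem' := by
    rintro g ⟨σ, a, ha, hpa, hga⟩
    exact ⟨σ⁻¹, _, ha.comp _, by rw [Equiv.prod_comp σ⁻¹ a, hpa], coe_inv_of_coe_eq_sp ha hga⟩

lemma mem_W6'Sub_iff {g : GL (Fin 6) ℂ} : g ∈ W6'Sub ↔ g ∈ W6'Set :=
  SetLike.ext_iff.mp (Subgroup.closure_eq W6'Grp) g

def flipPair (j k : Fin 6) : Fin 6 → ℂ := fun m => if m = j ∨ m = k then -1 else 1

lemma flipPair_signs (j k : Fin 6) : signs (flipPair j k) := by
  intro m
  unfold flipPair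
  split_ifs <;> simp

lemma prod_flipPair {j k : Fin 6} (hjk : j ≠ k) : ∏ m, flipPair j k m = 1 := by
  simp [flipPair, Finset.prod_ite, Finset.filter_or, Finset.filter_eq', Finset.card_pair hjk]

lemma flipPair_swap_apply {j k l : Fin 6} (hlj : l ≠ j) (hlk : l ≠ k) (m : Fin 6) :
    flipPair j l (Equiv.swap j k m) = flipPair k l m := by
  simp [flipPair, Equiv.swap_apply_eq_iff, Equiv.swap_apply_of_ne_of_ne hlj hlk]

lemma flipPair_mul_flipPair {j k l : Fin 6} (hjk : j ≠ k) (hlj : l ≠ j) (hlk : l ≠ k) :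
    (fun m => flipPair j l m * flipPair k l m) = flipPair j k := by
  funext m
  unfold flipPair
  by_cases hj : m = j <;> by_cases hk : m = k <;> by_cases hl : m = l <;> subst_vars <;> simp_all

def diagonalsIn (H : Subgroup (GL (Fin 6) ℂ)) : Submonoid (Fin 6 → ℂ) where
  carrier := {c | ∃ d ∈ H, (d : Matrix (Fin 6) (Fin 6) ℂ) = diagonal c}
  one_mem' := ⟨1, H.one_mem, by simp⟩
  mul_mem' := by
    rintro c c' ⟨d, hd, hdc⟩ ⟨d', hd', hdc'⟩
    refine ⟨d * d', H.mul_mem hd hd', ?_⟩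
    rw [Units.val_mul, hdc, hdc', diagonal_mul_diagonal]
    rfl

-- The `m`-th factor is `flipPair 0 m.succ` or `1`; coordinate `0` is right because `∏ c = 1`.
lemma eq_prod_flipPair_of_prod_eq_one {c : Fin 6 → ℂ} (hc : signs c) (hprod : ∏ m, c m = 1) :
    c = ∏ m : Fin 5, fun i => if i = 0 ∨ i = m.succ then c m.succ else 1 := by
  rw [Fin.prod_univ_succ] at hprod
  funext i
  rw [Finset.prod_apply]
  cases i using Fin.cases with
  | zero =>
    simp only [true_or, if_true]
    linear_combination -c 0 * hprod + (∏ m : Fin 5, c m.succ) * hc.mul_self 0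
  | succ j => simp [Fin.succ_ne_zero]

lemma mem_of_prod_eq_one (S : Submonoid (Fin 6 → ℂ)) (hS : ∀ j k, j ≠ k → flipPair j k ∈ S)
    {c : Fin 6 → ℂ} (hc : signs c) (hprod : ∏ m, c m = 1) : c ∈ S := by
  rw [eq_prod_flipPair_of_prod_eq_one hc hprod]
  refine S.prod_mem fun m _ => ?_
  rcases hc m.succ with h | h
  · simp only [h, ite_self]
    exact S.one_mem
  · simp only [h]
    exact hS 0 m.succ (Fin.succ_ne_zero m).symm

def diagonalSign (c : Fin 6 → ℂ) (hc : signs c) : GL (Fin 6) ℂ :=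
  ⟨diagonal c, diagonal c, by simp [diagonal_mul_diagonal, hc.mul_self],
    by simp [diagonal_mul_diagonal, hc.mul_self]⟩

lemma coe_conj_of_coe_eq_diagonal {h d : GL (Fin 6) ℂ} {σ : Equiv.Perm (Fin 6)}
    {b c : Fin 6 → ℂ} (hh : (h : Matrix (Fin 6) (Fin 6) ℂ) = sp σ b)
    (hd : (d : Matrix (Fin 6) (Fin 6) ℂ) = diagonal c) :
    ((h * d * h⁻¹ : GL (Fin 6) ℂ) : Matrix (Fin 6) (Fin 6) ℂ) = diagonal fun i => c (σ⁻¹ i) := by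
  rw [Units.val_mul, Units.val_mul, hh, hd, sp_mul_diagonal, ← hh, mul_assoc, ← Units.val_mul,
    mul_inv_cancel, Units.val_one, mul_one]

section NormalSubgroup

variable {H : Subgroup (GL (Fin 6) ℂ)}

lemma exists_mem_coe_eq_sp (hle : H ≤ W6'Sub)
    (hsurj : ∀ σ : Equiv.Perm (Fin 6), ∃ h ∈ H, ∃ a : Fin 6 → ℂ,
      (h : Matrix (Fin 6) (Fin 6) ℂ) = sp σ a) (σ : Equiv.Perm (Fin 6)) :
    ∃ h ∈ H, ∃ b, signs b ∧ ∏ k, b k = 1 ∧ (h : Matrix (Fin 6) (Fin 6) ℂ) = sp σ b := by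
  obtain ⟨h, hH, a, ha⟩ := hsurj σ
  obtain ⟨τ, b, hb, hpb, hhb⟩ := mem_W6'Sub_iff.mp (hle hH)
  obtain ⟨rfl, -⟩ := sp_injective hb (ha.symm.trans hhb)
  exact ⟨h, hH, b, hb, hpb, hhb⟩

lemma flipPair_mem_diagonalsIn (hle : H ≤ W6'Sub)
    (hnorm : ∀ g ∈ W6'Sub, ∀ h ∈ H, g * h * g⁻¹ ∈ H)
    (hsurj : ∀ σ : Equiv.Perm (Fin 6), ∃ h ∈ H, ∃ a : Fin 6 → ℂ,
      (h : Matrix (Fin 6) (Fin 6) ℂ) = sp σ a) {j k : Fin 6} (hjk : j ≠ k) :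
    flipPair j k ∈ diagonalsIn H := by
  have hthird : ∀ j k : Fin 6, ∃ l, l ≠ j ∧ l ≠ k := by decide
  obtain ⟨l, hlj, hlk⟩ := hthird j k
  set g := diagonalSign (flipPair j l) (flipPair_signs j l)
  have hgW : g ∈ W6'Sub :=
    mem_W6'Sub_iff.mpr
      ⟨1, flipPair j l, flipPair_signs j l, prod_flipPair hlj.symm, (sp_one _).symm⟩
  obtain ⟨h, hH, b, -, -, hh⟩ := exists_mem_coe_eq_sp hle hsurj (Equiv.swap j k)
  refine ⟨g * h * g⁻¹ * h⁻¹, H.mul_mem (hnorm g hgW h hH) (H.inv_mem hH), ?_⟩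
  have hg_inv : g⁻¹ = g := Units.ext rfl
  calc ((g * h * g⁻¹ * h⁻¹ : GL (Fin 6) ℂ) : Matrix (Fin 6) (Fin 6) ℂ)
      = (g : Matrix (Fin 6) (Fin 6) ℂ) *
          ((h * g * h⁻¹ : GL (Fin 6) ℂ) : Matrix (Fin 6) (Fin 6) ℂ) := by
        rw [hg_inv, ← Units.val_mul]; group
    _ = diagonal (flipPair j l) * diagonal fun i => flipPair j l (Equiv.swap j k i) := by
        rw [coe_conj_of_coe_eq_diagonal hh rfl, Equiv.swap_inv]; rfl
    _ = diagonal (flipPair j k) := by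
        simp only [diagonal_mul_diagonal, flipPair_swap_apply hlj hlk,
          flipPair_mul_flipPair hjk hlj hlk]

end NormalSubgroup

/-- If `H` is a normal subgroup of the type `D₆` Weyl group `W₆'` whose image under
the projection `π` to `S₆` is all of `S₆`, then `H = W₆'`. -/
theorem stmt_6 (H : Subgroup (GL (Fin 6) ℂ)) (hle : H ≤ W6'Sub)
    (hnorm : ∀ g ∈ W6'Sub, ∀ h ∈ H, g * h * g⁻¹ ∈ H)
    (hsurj : ∀ σ : Equiv.Perm (Fin 6), ∃ h ∈ H, ∃ a : Fin 6 → ℂ,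
      (h : Matrix (Fin 6) (Fin 6) ℂ) = sp σ a) :
    H = W6'Sub := by
  refine le_antisymm hle ((Subgroup.closure_le H).mpr ?_)
  rintro g ⟨σ, a, ha, hpa, hga⟩
  obtain ⟨h, hH, b, hb, hpb, hhb⟩ := exists_mem_coe_eq_sp hle hsurj σ
  obtain ⟨d, hdH, hd⟩ : (fun i => a (σ⁻¹ i) * b (σ⁻¹ i)) ∈ diagonalsIn H := by
    refine mem_of_prod_eq_one _ (fun j k => flipPair_mem_diagonalsIn hle hnorm hsurj)
      ((ha.mul hb).comp _) ?_
    rw [Equiv.prod_comp σ⁻¹ (fun k => a k * b k), Finset.prod_mul_distrib, hpa, hpb, one_mul]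
  have hg : g = d * h := Units.ext (by rw [Units.val_mul, hga, hd, hhb, sp_eq_diagonal_mul_sp hb])
  exact hg ▸ H.mul_mem hdH hH
end
end

section
/- Let 𝒲₆' = {w ∈ ⟨W₆⁺, i·Id⟩ : product of nonzero entries equals 1}, where W₆⁺ is the group of signed 6×6 permutation matrices of determinant 1. If G is a subgroup of G₃₁ = Λ⁻¹(𝒲₆') ⊂ GL(V) with Λ(G) = 𝒲₆', then G = G₃₁. -/
noncomputable section
open Matrix Complex


/-- The six index pairs `(i,j)`, `i<j`, of `Fin 4`, indexing the basis `eᵢ ∧ eⱼ` of `⋀²ℂ⁴`. -/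
def pairs : Fin 6 → Fin 4 × Fin 4 := ![(0,1),(0,2),(0,3),(1,2),(1,3),(2,3)]

/-- The second compound matrix: the matrix of `⋀²g` in the basis `eᵢ ∧ eⱼ`. -/
def lam2 (g : Matrix (Fin 4) (Fin 4) ℂ) : Matrix (Fin 6) (Fin 6) ℂ :=
  Matrix.of fun p q =>
    g (pairs p).1 (pairs q).1 * g (pairs p).2 (pairs q).2 -
      g (pairs p).1 (pairs q).2 * g (pairs p).2 (pairs q).1

def rt : ℂ := ((Real.sqrt 2 : ℝ) : ℂ)⁻¹

/-- Change of basis from an orthonormal basis of `⋀²ℂ⁴` (for the wedge form `b_∧`)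
to the basis `eᵢ ∧ eⱼ`. -/
def Pmat : Matrix (Fin 6) (Fin 6) ℂ :=
  !![rt, -I*rt, 0, 0, 0, 0;
     0, 0, -I*rt, rt, 0, 0;
     0, 0, 0, 0, rt, -I*rt;
     0, 0, 0, 0, rt, I*rt;
     0, 0, -I*rt, -rt, 0, 0;
     rt, I*rt, 0, 0, 0, 0]

/-- The exterior square map `Λ`, expressed in the fixed orthonormal basis of `⋀²ℂ⁴`. -/
def LamM (g : Matrix (Fin 4) (Fin 4) ℂ) : Matrix (Fin 6) (Fin 6) ℂ :=
  Pmat⁻¹ * lam2 g * Pmat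

/-- `G₃₁ = Λ⁻¹(𝒲₆')`. -/
def G31Set : Set (GL (Fin 4) ℂ) :=
  {g | ∃ h : GL (Fin 6) ℂ, h ∈ CW6'Set ∧
    (h : Matrix (Fin 6) (Fin 6) ℂ) = LamM (g : Matrix (Fin 4) (Fin 4) ℂ)}

def G31Sub : Subgroup (GL (Fin 4) ℂ) := Subgroup.closure G31Set

/-- `i · Id` in `GL₄(ℂ)`. -/
def iId4 : GL (Fin 4) ℂ :=
  ⟨Matrix.diagonal (fun _ => Complex.I), Matrix.diagonal (fun _ => -Complex.I),
    by simp [Matrix.diagonal_mul_diagonal, Complex.I_mul_I],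
    by simp [Matrix.diagonal_mul_diagonal, Complex.I_mul_I]⟩

/-- A (complex) reflection: a nonidentity element fixing a hyperplane pointwise. -/
def IsReflection (g : GL (Fin 4) ℂ) : Prop :=
  g ≠ 1 ∧
    Module.finrank ℂ
      (LinearMap.ker (Matrix.toLin' ((g : Matrix (Fin 4) (Fin 4) ℂ) - 1))) = 3

/-- The element `μ₀` of `W₆⁺` made of three rotation blocks. -/
def mu0 : Matrix (Fin 6) (Fin 6) ℂ :=
  !![0, 1, 0, 0, 0, 0;
     -1, 0, 0, 0, 0, 0;
     0, 0, 0, 1, 0, 0;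
     0, 0, -1, 0, 0, 0;
     0, 0, 0, 0, 0, 1;
     0, 0, 0, 0, -1, 0]

/-- `M̃`: the reflections of `G₃₁` lying over `i·μ`, `μ` in the `W₆⁺`-conjugacy class of `μ₀`. -/
def MtildeSet : Set (GL (Fin 4) ℂ) :=
  {g | IsReflection g ∧ ∃ w : GL (Fin 6) ℂ, w ∈ W6plusSet ∧
    LamM (g : Matrix (Fin 4) (Fin 4) ℂ) =
      Complex.I • ((w : Matrix (Fin 6) (Fin 6) ℂ) * mu0 * ((w⁻¹ : GL (Fin 6) ℂ) : Matrix (Fin 6) (Fin 6) ℂ))}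

/-- `O₂(G₃₁) = Λ⁻¹(A₆')` as a set. -/
def O2Set : Set (GL (Fin 4) ℂ) :=
  {g | ∃ h : GL (Fin 6) ℂ, h ∈ A6'Set ∧
    (h : Matrix (Fin 6) (Fin 6) ℂ) = LamM (g : Matrix (Fin 4) (Fin 4) ℂ)}

def O2Sub : Subgroup (GL (Fin 4) ℂ) := Subgroup.closure O2Set

/-- `H` is a normal 2-subgroup of `G`. -/
def IsNormal2SubgroupOf (H G : Subgroup (GL (Fin 4) ℂ)) : Prop :=
  H ≤ G ∧ (∀ g ∈ G, ∀ h ∈ H, g * h * g⁻¹ ∈ H) ∧ ∃ k : ℕ, Nat.card H = 2 ^ k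

/-! The second compound matrix `lam2 m` lists the `2 × 2` minors of `m`, and they determine `m`
up to sign once `m` is at least `3 × 3`; since `Λ` is `lam2` up to conjugation, `Λ g = Λ g'`
forces `g' = ±g`. Hence `G₃₁ = {±1} · G`, and it remains to see `-1 ∈ G`: the scalar `-1` lies
in `𝒲₆'`, so `Λ g = -1 = Λ (i · Id)` for some `g ∈ G`, whence `g = ±i · Id` and `g² = -1`. -/

def minor2 {ι R : Type*} [Mul R] [Sub R] (m : Matrix ι ι R) (i j k l : ι) : R :=
  m i k * m j l - m i l * m j k

section minor2

variable {ι R : Type*} [CommRing R] (m : Matrix ι ι R)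

theorem minor2_swap_rows (i j k l : ι) : minor2 m j i k l = -minor2 m i j k l := by
  unfold minor2; ring

theorem minor2_swap_cols (i j k l : ι) : minor2 m i j l k = -minor2 m i j k l := by
  unfold minor2; ring

theorem minor2_self_rows (i k l : ι) : minor2 m i i k l = 0 := by
  unfold minor2; ring

theorem minor2_self_cols (i j k : ι) : minor2 m i j k k = 0 := by
  unfold minor2; ring

theorem minor2_eq_of_forall_lt [LinearOrder ι] {m' : Matrix ι ι R}
    (h : ∀ i j k l, i < j → k < l → minor2 m i j k l = minor2 m' i j k l) (i j k l : ι) :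
    minor2 m i j k l = minor2 m' i j k l := by
  rcases lt_trichotomy i j with hij | rfl | hij
  · rcases lt_trichotomy k l with hkl | rfl | hkl
    · exact h i j k l hij hkl
    · simp only [minor2_self_cols]
    · rw [minor2_swap_cols m, minor2_swap_cols m', h i j l k hij hkl]
  · simp only [minor2_self_rows]
  · rw [minor2_swap_rows m, minor2_swap_rows m']
    rcases lt_trichotomy k l with hkl | rfl | hkl
    · rw [h j i k l hij hkl]
    · simp only [minor2_self_cols, neg_zero]
    · rw [minor2_swap_cols m, minor2_swap_cols m', h j i l k hij hkl]

end minor2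

theorem eq_one_or_eq_neg_one_of_minor2_eq {ι R : Type*} [Fintype ι] [DecidableEq ι]
    [CommRing R] [IsDomain R] (hι : 3 ≤ Fintype.card ι) {m : Matrix ι ι R}
    (h : ∀ i j k l, minor2 m i j k l = minor2 1 i j k l) : m = 1 ∨ m = -1 := by
  have exists_ne_ne : ∀ i j : ι, ∃ k, k ≠ i ∧ k ≠ j := by
    intro i j
    obtain ⟨k, -, hk⟩ := Finset.exists_mem_notMem_of_card_lt_card (s := {i, j})
      (t := Finset.univ) (by grind [Finset.card_le_two, Finset.card_univ])
    exact ⟨k, by grind, by grind⟩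
  have offDiag : ∀ i j, i ≠ j → m i j = 0 := by
    intro i j hij
    obtain ⟨k, hki, hkj⟩ := exists_ne_ne i j
    have hjk := h j k j k
    have hik := h i k j k
    have hij' := h i j j k
    simp only [minor2, one_apply, hij, hki.symm, hkj.symm, hkj, if_true, if_false,
      mul_one, mul_zero, sub_zero] at hjk hik hij'
    -- the `3 × 3` minor on rows `i, j, k` and columns `j, j, k` vanishes
    linear_combination -(m i j * hjk - m j j * hik + m k j * hij')
  have diag : ∀ i j, i ≠ j → m i i * m j j = 1 := by
    intro i j hij
    have hij' := h i j i j
    simpa [minor2, one_apply, hij, hij.symm, offDiag i j hij] using hij'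
  have const : ∀ i j, m i i = m j j := by
    intro i j
    obtain ⟨k, hki, hkj⟩ := exists_ne_ne i j
    exact mul_left_cancel₀ (left_ne_zero_of_mul_eq_one (diag k i hki))
      ((diag k i hki).trans (diag k j hkj).symm)
  obtain ⟨i, j, hij⟩ := Fintype.exists_pair_of_one_lt_card (α := ι) (by omega)
  have hm : m = m i i • 1 := by
    ext a b
    rcases eq_or_ne a b with rfl | hab
    · simp [const a i]
    · simp [offDiag a b hab, hab]
  rw [hm]
  rcases mul_self_eq_one_iff.mp (const j i ▸ diag i j hij) with h1 | h1 <;> simp [h1]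

theorem lam2_apply (m : Matrix (Fin 4) (Fin 4) ℂ) (p q : Fin 6) :
    lam2 m p q = minor2 m (pairs p).1 (pairs p).2 (pairs q).1 (pairs q).2 :=
  rfl

theorem exists_pairs_eq {i j : Fin 4} (h : i < j) : ∃ p, pairs p = (i, j) := by
  revert i j; decide

theorem lam2_mul (A B : Matrix (Fin 4) (Fin 4) ℂ) : lam2 (A * B) = lam2 A * lam2 B := by
  ext p q
  fin_cases p <;> fin_cases q <;>
    simp [lam2, pairs, Matrix.mul_apply, Fin.sum_univ_six, Fin.sum_univ_four] <;> ring

theorem lam2_one : lam2 (1 : Matrix (Fin 4) (Fin 4) ℂ) = 1 := by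
  ext p q
  fin_cases p <;> fin_cases q <;> simp [lam2, pairs, one_apply]

theorem lam2_smul (c : ℂ) (m : Matrix (Fin 4) (Fin 4) ℂ) : lam2 (c • m) = c ^ 2 • lam2 m := by
  ext p q
  simp only [lam2, of_apply, Matrix.smul_apply, smul_eq_mul]
  ring

theorem eq_one_or_eq_neg_one_of_lam2_eq_one {m : Matrix (Fin 4) (Fin 4) ℂ} (h : lam2 m = 1) :
    m = 1 ∨ m = -1 := by
  refine eq_one_or_eq_neg_one_of_minor2_eq (by simp)
    (minor2_eq_of_forall_lt m fun i j k l hij hkl => ?_)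
  obtain ⟨p, hp⟩ := exists_pairs_eq hij
  obtain ⟨q, hq⟩ := exists_pairs_eq hkl
  have hpq := congrFun₂ (h.trans lam2_one.symm) p q
  rwa [lam2_apply, lam2_apply, hp, hq] at hpq

theorem conj_rt : starRingEnd ℂ rt = rt := by
  simp [rt, Complex.conj_ofReal]

theorem Pmat_mul_conjTranspose : Pmat * Pmatᴴ = 1 := by
  have hrt : rt ^ 2 = 2⁻¹ := by
    rw [rt, inv_pow, ← Complex.ofReal_pow, Real.sq_sqrt zero_le_two, Complex.ofReal_ofNat]
  ext i j
  fin_cases i <;> fin_cases j <;>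
    simp [Pmat, Matrix.mul_apply, Fin.sum_univ_six, conjTranspose_apply, conj_rt, one_apply] <;>
    ring_nf <;> simp only [I_sq, hrt] <;> norm_num

theorem isUnit_det_Pmat : IsUnit Pmat.det :=
  isUnit_det_of_right_inverse Pmat_mul_conjTranspose

theorem lam2_eq_of_LamM_eq {A B : Matrix (Fin 4) (Fin 4) ℂ} (h : LamM A = LamM B) :
    lam2 A = lam2 B := by
  have hconj : ∀ X : Matrix (Fin 6) (Fin 6) ℂ, Pmat * (Pmat⁻¹ * X * Pmat) * Pmat⁻¹ = X := by
    intro X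
    simp [Matrix.mul_assoc, mul_nonsing_inv _ isUnit_det_Pmat,
      mul_nonsing_inv_cancel_left _ _ isUnit_det_Pmat]
  rw [← hconj (lam2 A), ← hconj (lam2 B)]
  exact congrArg (fun Y => Pmat * Y * Pmat⁻¹) h

theorem LamM_smul_one (c : ℂ) : LamM (c • 1) = c ^ 2 • 1 := by
  simp [LamM, lam2_smul, lam2_one, nonsing_inv_mul _ isUnit_det_Pmat]

theorem eq_or_eq_neg_of_LamM_eq {A B : GL (Fin 4) ℂ}
    (h : LamM (A : Matrix (Fin 4) (Fin 4) ℂ) = LamM (B : Matrix (Fin 4) (Fin 4) ℂ)) :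
    A = B ∨ A = -B := by
  have hAB : lam2 ((A * B⁻¹ : GL (Fin 4) ℂ) : Matrix (Fin 4) (Fin 4) ℂ) = 1 := by
    rw [Units.val_mul, lam2_mul, lam2_eq_of_LamM_eq h, ← lam2_mul, ← Units.val_mul,
      mul_inv_cancel, Units.val_one, lam2_one]
  rcases eq_one_or_eq_neg_one_of_lam2_eq_one hAB with h1 | h1
  · exact .inl (mul_inv_eq_one.mp (Units.ext h1))
  · right
    rw [← neg_one_mul, ← mul_inv_eq_iff_eq_mul]
    exact Units.ext (by simpa using h1)

theorem iId4_val : (iId4 : Matrix (Fin 4) (Fin 4) ℂ) = I • 1 := by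
  rw [smul_one_eq_diagonal]; rfl

theorem iId4_mul_self : iId4 * iId4 = -1 :=
  Units.ext (by simp [iId4_val, smul_smul])

theorem LamM_iId4 : LamM (iId4 : Matrix (Fin 4) (Fin 4) ℂ) = -1 := by
  simp [iId4_val, LamM_smul_one]

theorem neg_one_mem_CW6'Set : (-1 : GL (Fin 6) ℂ) ∈ CW6'Set := by
  refine ⟨Subgroup.subset_closure (.inl ⟨1, fun _ => -1, fun _ => .inr rfl, ?_, ?_⟩), ?_⟩
  · ext i j
    by_cases hij : i = j <;> simp [sp, one_apply, hij]
  · norm_num [Matrix.det_neg]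
  · norm_num [gam, Finset.sum_neg_distrib, one_apply]

theorem neg_one_mem_of_LamM_eq_neg_one {G : Subgroup (GL (Fin 4) ℂ)} {g : GL (Fin 4) ℂ}
    (hg : g ∈ G) (h : LamM (g : Matrix (Fin 4) (Fin 4) ℂ) = -1) : -1 ∈ G := by
  have hsq : g * g = -1 := by
    rcases eq_or_eq_neg_of_LamM_eq (h.trans LamM_iId4.symm) with rfl | rfl
    · exact iId4_mul_self
    · rw [neg_mul_neg, iId4_mul_self]
  exact hsq ▸ mul_mem hg hg

/-- If `G` is a subgroup of `G₃₁ = Λ⁻¹(𝒲₆')` with `Λ(G) = 𝒲₆'`, then `G = G₃₁`. -/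
theorem stmt_7 (G : Subgroup (GL (Fin 4) ℂ)) (hle : (G : Set (GL (Fin 4) ℂ)) ⊆ G31Set)
    (him : ∀ h : GL (Fin 6) ℂ, h ∈ CW6'Set ↔
      ∃ g ∈ G, (h : Matrix (Fin 6) (Fin 6) ℂ) = LamM (g : Matrix (Fin 4) (Fin 4) ℂ)) :
    (G : Set (GL (Fin 4) ℂ)) = G31Set := by
  refine hle.antisymm fun x ⟨h, hh, hx⟩ => ?_
  have neg_one_mem : (-1 : GL (Fin 4) ℂ) ∈ G := by
    obtain ⟨g, hg, hgI⟩ := (him (-1)).mp neg_one_mem_CW6'Set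
    exact neg_one_mem_of_LamM_eq_neg_one hg (by rw [← hgI]; simp)
  obtain ⟨g, hg, hgh⟩ := (him h).mp hh
  rcases eq_or_eq_neg_of_LamM_eq (hx.symm.trans hgh) with rfl | rfl
  · exact hg
  · exact neg_one_mul g ▸ mul_mem neg_one_mem hg
end
end

section
/- Every morphism of groups f : S₆ → T ⋊ S₆ with π ∘ f = Id (where T is the diagonal torus in GL₆(ℂ), S₆ acts by permuting coordinates, and π is the projection to S₆) has image contained in the kernel of the map γ(t ⋊ σ) = det t. -/
noncomputable section
open Matrix Complex

/-! The composite `γ ∘ f` is a character of `S₆` with values in the commutative monoid `ℂ`, so it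
factors through the sign: all transpositions are conjugate, hence share one value `ε`, and
`ε² = 1`. For the `6`-cycle `ρ` the section gives `f ρ = sp ρ t` with `(sp ρ t)⁶ = f (ρ⁶) = 1`;
the `(0, 0)` entry of this power is `t₀ ⋯ t₅ = γ (f ρ)`, so `γ (f ρ) = 1`. Since `ρ` is odd,
this forces `ε = 1`, and `γ ∘ f` is trivial. -/

namespace Equiv.Perm

variable {α M : Type*} [DecidableEq α] [CommMonoid M]

theorem map_swap_eq_map_swap (χ : Perm α →* M) {a b c d : α} (hab : a ≠ b) (hcd : c ≠ d) :
    χ (swap a b) = χ (swap c d) :=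
  isConj_iff_eq.1 (χ.map_isConj (isConj_swap hab hcd))

variable [Fintype α]

theorem map_eq_ite_sign (χ : Perm α →* M) {a b : α} (hab : a ≠ b) (σ : Perm α) :
    χ σ = if sign σ = 1 then 1 else χ (swap a b) := by
  induction σ using swap_induction_on with
  | one => simp
  | swap_mul τ x y hxy ih =>
    have hsq : χ (swap a b) * χ (swap a b) = 1 := by rw [← map_mul, swap_mul_self, map_one]
    rw [map_mul, sign_mul, sign_swap hxy, ih, map_swap_eq_map_swap χ hxy hab]
    rcases Int.units_eq_one_or (sign τ) with h | h <;> simp [h, hsq]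

theorem map_eq_one_of_map_eq_one_of_sign_eq_neg_one (χ : Perm α →* M) {τ : Perm α}
    (hτ : sign τ = -1) (hχτ : χ τ = 1) (σ : Perm α) : χ σ = 1 := by
  obtain ⟨a, ha⟩ : ∃ a, τ a ≠ a := not_forall.1 fun h => by
    simp [show τ = 1 from Equiv.ext h] at hτ
  have hswap : χ (swap (τ a) a) = 1 := by
    rw [← hχτ, map_eq_ite_sign χ ha τ, hτ, if_neg (by decide)]
  rw [map_eq_ite_sign χ ha σ, hswap, ite_self]

end Equiv.Perm

lemma sp_pow (σ : Equiv.Perm (Fin 6)) (t : Fin 6 → ℂ) (n : ℕ) :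
    sp σ t ^ n = sp (σ ^ n) (fun j => ∏ k ∈ Finset.range n, t ((σ ^ k) j)) := by
  induction n with
  | zero => ext i j; simp [sp, Matrix.one_apply]
  | succ n ih =>
    rw [pow_succ, ih, sp_mul, ← pow_succ]
    congr 1
    ext j
    simp only [Finset.prod_range_succ', pow_succ, Equiv.Perm.mul_apply, pow_zero,
      Equiv.Perm.one_apply]

lemma gam_sp (σ : Equiv.Perm (Fin 6)) (a : Fin 6 → ℂ) : gam (sp σ a) = ∏ j, a j := by
  simp [gam, sp]

lemma gam_one : gam 1 = 1 := by
  simp [gam, Matrix.one_apply]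

lemma gam_sp_mul_sp (σ τ : Equiv.Perm (Fin 6)) (a b : Fin 6 → ℂ) :
    gam (sp σ a * sp τ b) = gam (sp σ a) * gam (sp τ b) := by
  rw [sp_mul, gam_sp, gam_sp, gam_sp, Finset.prod_mul_distrib, Equiv.prod_comp]

lemma prod_eq_one_of_sp_finRotate_pow_eq_one (t : Fin 6 → ℂ) (h : sp (finRotate 6) t ^ 6 = 1) :
    ∏ j, t j = 1 := by
  have h00 := congrFun₂ h 0 0
  rw [sp_pow, show finRotate 6 ^ 6 = 1 by decide] at h00
  simp only [sp, Matrix.of_apply, Equiv.Perm.one_apply, if_true, Matrix.one_apply_eq] at h00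
  rw [← h00, ← Fin.prod_univ_eq_prod_range (fun k => t ((finRotate 6 ^ k) 0))]
  have h : ∀ k : Fin 6, (finRotate 6 ^ (k : ℕ)) 0 = k := by decide
  simp only [h]

def gamHom (f : Equiv.Perm (Fin 6) →* GL (Fin 6) ℂ)
    (hsec : ∀ σ : Equiv.Perm (Fin 6), ∃ t : Fin 6 → ℂ,
      ((f σ : GL (Fin 6) ℂ) : Matrix (Fin 6) (Fin 6) ℂ) = sp σ t) :
    Equiv.Perm (Fin 6) →* ℂ where
  toFun σ := gam (f σ : Matrix (Fin 6) (Fin 6) ℂ)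
  map_one' := by rw [map_one, Units.val_one, gam_one]
  map_mul' σ τ := by
    obtain ⟨a, ha⟩ := hsec σ
    obtain ⟨b, hb⟩ := hsec τ
    rw [map_mul, Units.val_mul, ha, hb, gam_sp_mul_sp]

/-- Any group morphism `f : S₆ → T ⋊ S₆` with `π ∘ f = Id` has image contained in
`ker γ`, where `γ(t ⋊ σ) = det t` is the product of the nonzero entries. -/
theorem stmt_8 (f : Equiv.Perm (Fin 6) →* GL (Fin 6) ℂ)
    (hsec : ∀ σ : Equiv.Perm (Fin 6), ∃ t : Fin 6 → ℂ,
      ((f σ : GL (Fin 6) ℂ) : Matrix (Fin 6) (Fin 6) ℂ) = sp σ t) :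
    ∀ σ : Equiv.Perm (Fin 6),
      gam ((f σ : GL (Fin 6) ℂ) : Matrix (Fin 6) (Fin 6) ℂ) = 1 := by
  obtain ⟨t, ht⟩ := hsec (finRotate 6)
  have hrot : gamHom f hsec (finRotate 6) = 1 := by
    change gam _ = 1
    rw [ht, gam_sp]
    apply prod_eq_one_of_sp_finRotate_pow_eq_one
    rw [← ht, ← Units.val_pow_eq_pow_val, ← map_pow, show finRotate 6 ^ 6 = 1 by decide,
      map_one, Units.val_one]
  exact Equiv.Perm.map_eq_one_of_map_eq_one_of_sign_eq_neg_one (gamHom f hsec)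
    (by rw [sign_finRotate]; decide) hrot
end
end

section
/- The exact sequence 1 → A₆' → W₆⁺ → S₆ → 1 is not split, where W₆⁺ is the group of signed 6×6 permutation matrices of determinant 1, A₆' is its subgroup of diagonal matrices, and the map to S₆ is the underlying permutation. -/
noncomputable section
open Matrix Complex

lemma sp_eq (σ : Equiv.Perm (Fin 6)) (a : Fin 6 → ℂ) :
    sp σ a = (Matrix.diagonal a).submatrix ⇑σ⁻¹ id := by
  ext i j
  simp only [sp, Matrix.of_apply, Matrix.submatrix_apply, Matrix.diagonal_apply, id]
  by_cases h : i = σ j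
  · subst h; simp
  · rw [if_neg h, if_neg (by simpa [Equiv.Perm.inv_def, Equiv.symm_apply_eq] using h)]

lemma sp_det (σ : Equiv.Perm (Fin 6)) (a : Fin 6 → ℂ) :
    (sp σ a).det = (Equiv.Perm.sign σ : ℂ) * ∏ k, a k := by
  rw [sp_eq, Matrix.det_permute, Matrix.det_diagonal]
  simp

/-- The exact sequence `1 → A₆' → W₆⁺ → S₆ → 1` is not split: there is no group
morphism `f : S₆ → W₆⁺` which is a section of the underlying-permutation map. -/
theorem stmt_11 :
    ¬ ∃ f : Equiv.Perm (Fin 6) →* GL (Fin 6) ℂ,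
      ∀ σ : Equiv.Perm (Fin 6), ∃ a : Fin 6 → ℂ, signs a ∧
        ((f σ) : Matrix (Fin 6) (Fin 6) ℂ) = sp σ a ∧
        ((f σ) : Matrix (Fin 6) (Fin 6) ℂ).det = 1 := by
  rintro ⟨f, hf⟩
  set σ0 : Equiv.Perm (Fin 6) :=
    (Equiv.swap 0 1) * (Equiv.swap 2 3) * (Equiv.swap 4 5) with hσ0
  obtain ⟨a, ha, h1, h2⟩ := hf σ0
  have hsq : f σ0 * f σ0 = 1 := by
    rw [← _root_.map_mul]
    have : σ0 * σ0 = 1 := by decide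
    rw [this, _root_.map_one]
  have hm : sp σ0 a * sp σ0 a = 1 := by
    calc sp σ0 a * sp σ0 a = ((f σ0 * f σ0 : GL (Fin 6) ℂ) : Matrix (Fin 6) (Fin 6) ℂ) := by
          rw [Units.val_mul, h1]
      _ = 1 := by rw [hsq]; rfl
  have v0 : σ0 0 = 1 := by decide
  have v1 : σ0 1 = 0 := by decide
  have v2 : σ0 2 = 3 := by decide
  have v3 : σ0 3 = 2 := by decide
  have v4 : σ0 4 = 5 := by decide
  have v5 : σ0 5 = 4 := by decide
  have e0 := congrFun (congrFun hm 0) 0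
  have e2 := congrFun (congrFun hm 2) 2
  have e4 := congrFun (congrFun hm 4) 4
  simp only [Matrix.mul_apply, sp, Matrix.of_apply, Fin.sum_univ_six, Matrix.one_apply,
    v0, v1, v2, v3, v4, v5, Fin.reduceEq, reduceIte] at e0 e2 e4
  norm_num at e0 e2 e4
  have hprod : (∏ k, a k) = 1 := by
    rw [Fin.prod_univ_six]
    linear_combination (a 2 * a 3 * a 4 * a 5) * e0 + (a 4 * a 5) * e2 + e4
  have hsign : Equiv.Perm.sign σ0 = -1 := by decide
  rw [h1, sp_det, hprod, hsign] at h2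
  norm_num at h2
end
end
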